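/- Let Σ=(X,U,φ) be a system with inputs and let ‖·‖_U be an admissible functional on U. Let Assumption A1 hold. If Σ is 0-GUAS and UGB (with respect to ‖·‖_U), then Σ is UGS (with respect to ‖·‖_U), i.e. there exist α,ρ∈K∞ such that ‖φ(t,t0,x0,u)‖_X ≤ α(‖x0‖_X)+ρ(‖u‖_U) for all t≥t0≥0, x0∈X, u∈U. -/

import Mathlib

/-!
The proof passes through uniform local stability (ULS). Given `ε`, choose `δ` with
`β(δ, 0) < ε / 2` and a time `T` with `β(δ, T) < δ / 2`. On a window of length `T` starting in
the `δ`-ball, UGB and 0-GUAS bound the perturbed and the unperturbed trajectory by a common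
radius, so Assumption A1 keeps them within `min(ε, δ) / 2` of each other for small inputs: the
trajectory stays `ε`-small on the window and is back in the `δ`-ball at its end. Chaining windows
gives ULS.

ULS bounds `‖φ‖` when `m = max(‖x₀‖, ‖u‖_U)` is small and UGB bounds it by `c + α(m) + ρ(m)`
when `m` is large. With `d n` a ULS radius for the bound `2⁻ⁿ`, the function
`α + ρ + c · ramp_{d 0} + ∑ₙ 2⁻ⁿ ramp_{d (n+1)}` is a `K∞` majorant of both, and
`σ(max(a, b)) ≤ σ(a) + σ(b)` splits it into the UGS estimate.
-/

open Set Filter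

/-- A (forward complete) time-varying system with inputs `Σ = (X, U, φ)`:
`U` is a set of admissible inputs containing the zero input and closed under
concatenation, and `φ` is a transition map satisfying the identity, causality
and semigroup axioms. -/
structure Sys (X Uv : Type*) [NormedAddCommGroup X] [NormedSpace ℝ X]
    [AddCommGroup Uv] [Module ℝ Uv] where
  U : Set (ℝ → Uv)
  zero_mem : (fun _ => (0 : Uv)) ∈ U
  concat_mem : ∀ u ∈ U, ∀ v ∈ U, ∀ t : ℝ, 0 < t →
      (fun r => if r ≤ t then u r else v r) ∈ U
  phi : ℝ → ℝ → X → (ℝ → Uv) → X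
  identity : ∀ t : ℝ, 0 ≤ t → ∀ x u, u ∈ U → phi t t x u = x
  causality : ∀ s t : ℝ, ∀ x : X, ∀ u v, 0 ≤ s → s < t → u ∈ U → v ∈ U →
      (∀ r, s < r → r ≤ t → v r = u r) → phi t s x v = phi t s x u
  semigroup : ∀ s τ t : ℝ, ∀ x : X, ∀ u, 0 ≤ s → s < τ → τ < t → u ∈ U →
      phi t τ (phi τ s x u) u = phi t s x u

variable {X Uv : Type*} [NormedAddCommGroup X] [NormedSpace ℝ X]
  [AddCommGroup Uv] [Module ℝ Uv]

/-- The truncation `u_(s,t]` of an input. -/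
noncomputable def trunc (u : ℝ → Uv) (s t : ℝ) : ℝ → Uv := fun r => if s < r ∧ r ≤ t then u r else 0

/-- The truncation `u_(s,∞)` of an input. -/
noncomputable def truncFrom (u : ℝ → Uv) (s : ℝ) : ℝ → Uv := fun r => if s < r then u r else 0

/-- An admissible functional `‖·‖_U : U → [0,∞]`. -/
structure IsAdmissible (S : Sys X Uv) (nrm : (ℝ → Uv) → ENNReal) : Prop where
  zero : nrm (fun _ => (0 : Uv)) = 0
  fin : ∀ u ∈ S.U, ∀ s t : ℝ, 0 ≤ s → s < t → nrm (trunc u s t) < ⊤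
  le_tail : ∀ u ∈ S.U, ∀ s t : ℝ, 0 ≤ s → s < t → nrm (trunc u s t) ≤ nrm (truncFrom u s)
  tail_le : ∀ u ∈ S.U, ∀ s : ℝ, 0 ≤ s → nrm (truncFrom u s) ≤ nrm u

/-- A function of class `K`. -/
def ClassK (α : ℝ → ℝ) : Prop :=
  ContinuousOn α (Ici 0) ∧ StrictMonoOn α (Ici 0) ∧ α 0 = 0

/-- A function of class `K∞`. -/
def ClassKInf (α : ℝ → ℝ) : Prop := ClassK α ∧ Tendsto α atTop atTop


/-- A function of class `KL`. -/
def ClassKL (β : ℝ → ℝ → ℝ) : Prop :=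
  (∀ t ≥ (0:ℝ), ClassK (fun r => β r t)) ∧
  (∀ r ≥ (0:ℝ), AntitoneOn (fun t => β r t) (Ici 0) ∧
    Tendsto (fun t => β r t) atTop (nhds 0))

/-- Assumption 1: continuity of trajectories with respect to the input at the zero input,
uniformly over the initial time. -/
def AssumptionA1 (S : Sys X Uv) (nrm : (ℝ → Uv) → ENNReal) : Prop :=
  ∀ r > (0:ℝ), ∀ ε > (0:ℝ), ∀ T > (0:ℝ), ∃ δ > (0:ℝ),
    ∀ t0 ≥ (0:ℝ), ∀ x0 : X, ∀ u ∈ S.U, nrm u ≤ ENNReal.ofReal δ →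
      ∀ tstar ∈ Icc t0 (t0 + T),
        (∀ t ∈ Icc t0 tstar,
            ‖S.phi t t0 x0 u‖ ≤ r ∧ ‖S.phi t t0 x0 (fun _ => 0)‖ ≤ r) →
        ∀ t ∈ Icc t0 tstar,
          ‖S.phi t t0 x0 (fun _ => 0) - S.phi t t0 x0 u‖ ≤ ε

/-- The system is 0-GUAS: globally uniformly asymptotically stable under zero input. -/
def ZeroGUAS (S : Sys X Uv) : Prop :=
  ∃ β, ClassKL β ∧ ∀ t0 ≥ (0:ℝ), ∀ x0 : X, ∀ t ≥ t0,
    ‖S.phi t t0 x0 (fun _ => 0)‖ ≤ β ‖x0‖ (t - t0)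

/-- The system is ISS with respect to the admissible functional `nrm`.
Inputs with infinite `nrm` satisfy the estimate trivially thanks to the
convention `ρ(∞) = ∞`, so only inputs of finite `nrm` are quantified over. -/
def ISS (S : Sys X Uv) (nrm : (ℝ → Uv) → ENNReal) : Prop :=
  ∃ β ρ, ClassKL β ∧ ClassKInf ρ ∧
    ∀ t0 ≥ (0:ℝ), ∀ x0 : X, ∀ u ∈ S.U, nrm u < ⊤ → ∀ t ≥ t0,
      ‖S.phi t t0 x0 u‖ ≤ β ‖x0‖ (t - t0) + ρ (nrm u).toReal

/-- The system is UGB (uniformly globally bounded) with respect to `nrm`. -/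
def UGB (S : Sys X Uv) (nrm : (ℝ → Uv) → ENNReal) : Prop :=
  ∃ c α ρ, 0 ≤ c ∧ ClassKInf α ∧ ClassKInf ρ ∧
    ∀ t0 ≥ (0:ℝ), ∀ x0 : X, ∀ u ∈ S.U, nrm u < ⊤ → ∀ t ≥ t0,
      ‖S.phi t t0 x0 u‖ ≤ c + α ‖x0‖ + ρ (nrm u).toReal

/-- The system is UGS (uniformly globally stable) with respect to `nrm`, i.e. UGB with `c = 0`. -/
def UGS (S : Sys X Uv) (nrm : (ℝ → Uv) → ENNReal) : Prop :=
  ∃ α ρ, ClassKInf α ∧ ClassKInf ρ ∧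
    ∀ t0 ≥ (0:ℝ), ∀ x0 : X, ∀ u ∈ S.U, nrm u < ⊤ → ∀ t ≥ t0,
      ‖S.phi t t0 x0 u‖ ≤ α ‖x0‖ + ρ (nrm u).toReal

/-- Condition (E) on the admissible functional. -/
def CondE (S : Sys X Uv) (nrm : (ℝ → Uv) → ENNReal) : Prop :=
  ∀ u ∈ S.U, ∀ t1 t2 t3 : ℝ, 0 ≤ t1 → t1 < t2 → t2 < t3 →
    nrm (trunc u t1 t2) + nrm (trunc u t2 t3) ≤ nrm (trunc u t1 t3)

open Topology

namespace ClassK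

variable {α : ℝ → ℝ}

theorem monotoneOn (hα : ClassK α) : MonotoneOn α (Ici 0) := hα.2.1.monotoneOn

theorem nonneg (hα : ClassK α) {x : ℝ} (hx : 0 ≤ x) : 0 ≤ α x :=
  hα.2.2 ▸ hα.monotoneOn self_mem_Ici hx hx

theorem pos (hα : ClassK α) {x : ℝ} (hx : 0 < x) : 0 < α x :=
  hα.2.2 ▸ hα.2.1 self_mem_Ici hx.le hx

theorem exists_pos_lt (hα : ClassK α) {ε : ℝ} (hε : 0 < ε) : ∃ δ > 0, α δ < ε := by
  have hlim : Tendsto α (𝓝[>] 0) (𝓝 0) := by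
    simpa [hα.2.2] using ((hα.1 0 self_mem_Ici).mono Ioi_subset_Ici_self).tendsto
  obtain ⟨δ, hδα, hδ⟩ := ((hlim.eventually (gt_mem_nhds hε)).and self_mem_nhdsWithin).exists
  exact ⟨δ, hδ, hδα⟩

theorem map_max_le_add (hα : ClassK α) {a b : ℝ} (ha : 0 ≤ a) (hb : 0 ≤ b) :
    α (max a b) ≤ α a + α b := by
  rcases max_choice a b with h | h <;> rw [h]
  · linarith [hα.nonneg hb]
  · linarith [hα.nonneg ha]

end ClassK

theorem ClassKL.mono {β : ℝ → ℝ → ℝ} (hβ : ClassKL β) {r r' t t' : ℝ} (hr : 0 ≤ r)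
    (hrr' : r ≤ r') (ht : 0 ≤ t) (htt' : t ≤ t') : β r t' ≤ β r' t :=
  ((hβ.1 t' (ht.trans htt')).monotoneOn hr (hr.trans hrr') hrr').trans
    ((hβ.2 r' (hr.trans hrr')).1 ht (ht.trans htt') htt')

theorem ClassKInf.add {γ f : ℝ → ℝ} (hγ : ClassKInf γ) (hf : ContinuousOn f (Ici 0))
    (hfm : MonotoneOn f (Ici 0)) (hf0 : f 0 = 0) : ClassKInf (fun m => γ m + f m) := by
  have hfnn : ∀ m ∈ Ici (0 : ℝ), 0 ≤ f m := fun m hm => hf0 ▸ hfm self_mem_Ici hm hm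
  refine ⟨⟨hγ.1.1.add hf, fun a ha b hb hab => ?_, by simp [hγ.1.2.2, hf0]⟩, ?_⟩
  · exact add_lt_add_of_lt_of_le (hγ.1.2.1 ha hb hab) (hfm ha hb hab.le)
  · refine tendsto_atTop_mono' atTop ?_ hγ.2
    filter_upwards [eventually_ge_atTop 0] with m hm
    linarith [hfnn m hm]

noncomputable def ramp (d m : ℝ) : ℝ := min 1 (max 0 (m / d))

theorem ramp_nonneg (d m : ℝ) : 0 ≤ ramp d m := le_min zero_le_one (le_max_left _ _)

theorem ramp_le_one (d m : ℝ) : ramp d m ≤ 1 := min_le_left _ _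

theorem ramp_zero (d : ℝ) : ramp d 0 = 0 := by simp [ramp]

theorem ramp_eq_one {d m : ℝ} (hd : 0 < d) (hm : d ≤ m) : ramp d m = 1 :=
  min_eq_left (le_max_of_le_right ((one_le_div hd).2 hm))

theorem continuous_ramp (d : ℝ) : Continuous (ramp d) := by
  unfold ramp; fun_prop

theorem monotone_ramp {d : ℝ} (hd : 0 ≤ d) : Monotone (ramp d) := fun _ _ h =>
  min_le_min le_rfl (max_le_max le_rfl (div_le_div_of_nonneg_right h hd))

noncomputable def rampSeries (d : ℕ → ℝ) (m : ℝ) : ℝ := ∑' n, (1 / 2 : ℝ) ^ n * ramp (d n) m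

section rampSeries

variable (d : ℕ → ℝ)

theorem ramp_term_le (n : ℕ) (m : ℝ) : (1 / 2 : ℝ) ^ n * ramp (d n) m ≤ (1 / 2) ^ n :=
  mul_le_of_le_one_right (by positivity) (ramp_le_one _ _)

theorem ramp_term_nonneg (n : ℕ) (m : ℝ) : 0 ≤ (1 / 2 : ℝ) ^ n * ramp (d n) m :=
  mul_nonneg (by positivity) (ramp_nonneg _ _)

theorem summable_ramp_terms (m : ℝ) : Summable fun n => (1 / 2 : ℝ) ^ n * ramp (d n) m :=
  .of_nonneg_of_le (ramp_term_nonneg d · m) (ramp_term_le d · m) summable_geometric_two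

theorem le_rampSeries (n : ℕ) (m : ℝ) : (1 / 2 : ℝ) ^ n * ramp (d n) m ≤ rampSeries d m :=
  (summable_ramp_terms d m).le_tsum n fun j _ => ramp_term_nonneg d j m

theorem rampSeries_nonneg (m : ℝ) : 0 ≤ rampSeries d m := tsum_nonneg (ramp_term_nonneg d · m)

theorem rampSeries_zero : rampSeries d 0 = 0 := by simp [rampSeries, ramp_zero]

theorem continuous_rampSeries : Continuous (rampSeries d) :=
  continuous_tsum (fun n => continuous_const.mul (continuous_ramp _)) summable_geometric_two
    fun n m => by rw [Real.norm_of_nonneg (ramp_term_nonneg d n m)]; exact ramp_term_le d n m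

theorem monotone_rampSeries (hd : ∀ n, 0 ≤ d n) : Monotone (rampSeries d) := fun _ _ h =>
  Summable.tsum_le_tsum
    (fun n => mul_le_mul_of_nonneg_left (monotone_ramp (hd n) h) (by positivity))
    (summable_ramp_terms d _) (summable_ramp_terms d _)

end rampSeries

theorem exists_succ_lt_le {d : ℕ → ℝ} {m : ℝ} (h0 : m ≤ d 0) (h : ∃ n, d n < m) :
    ∃ k, d (k + 1) < m ∧ m ≤ d k := by
  obtain ⟨n, hn⟩ := h
  by_contra! hstep
  have hdown : ∀ n, d n < m → d 0 < m := fun n =>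
    Nat.rec id (fun k ih hk => ih (hstep k hk)) n
  exact (hdown n hn).not_ge h0

theorem exists_classKInf_majorant {s : Set (ℝ × ℝ)} {c : ℝ} {γ : ℝ → ℝ} (hc : 0 ≤ c)
    (hγ : ClassKInf γ) (hs : ∀ p ∈ s, 0 ≤ p.1)
    (hsmall : ∀ ε > (0 : ℝ), ∃ δ > (0 : ℝ), ∀ p ∈ s, p.1 ≤ δ → p.2 ≤ ε)
    (hlarge : ∀ p ∈ s, p.2 ≤ c + γ p.1) :
    ∃ σ, ClassKInf σ ∧ ∀ p ∈ s, p.2 ≤ σ p.1 := by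
  choose δ hδ hδs using fun n : ℕ => hsmall ((1 / 2) ^ n) (by positivity)
  set d : ℕ → ℝ := fun n => min (δ n) ((1 / 2) ^ n)
  have hd : ∀ n, 0 < d n := fun n => lt_min (hδ n) (by positivity)
  have hds : ∀ n, ∀ p ∈ s, p.1 ≤ d n → p.2 ≤ (1 / 2) ^ n := fun n p hp hpd =>
    hδs n p hp (hpd.trans (min_le_left _ _))
  have hd_lim : Tendsto d atTop (𝓝 0) :=
    squeeze_zero (fun n => (hd n).le) (fun n => min_le_right _ _)
      (tendsto_pow_atTop_nhds_zero_of_lt_one (by norm_num) (by norm_num))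
  set f : ℝ → ℝ := fun m => c * ramp (d 0) m + rampSeries (fun n => d (n + 1)) m
  have hf_mono : Monotone f :=
    ((monotone_ramp (hd 0).le).const_mul hc).add (monotone_rampSeries _ fun n => (hd _).le)
  have hf_cont : Continuous f :=
    (continuous_const.mul (continuous_ramp _)).add (continuous_rampSeries _)
  have hf0 : f 0 = 0 := by simp [f, ramp_zero, rampSeries_zero]
  refine ⟨fun m => γ m + f m, hγ.add hf_cont.continuousOn (hf_mono.monotoneOn _) hf0, ?_⟩
  rintro ⟨m, y⟩ hp
  have hm : 0 ≤ m := hs _ hp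
  have hσ_nonneg : 0 ≤ γ m + f m := add_nonneg (hγ.1.nonneg hm) (hf0 ▸ hf_mono hm)
  have hseries := rampSeries_nonneg (fun n => d (n + 1)) m
  dsimp only
  rcases lt_or_ge (d 0) m with hlt | hle
  · have := hlarge _ hp
    simp only [f, ramp_eq_one (hd 0) hlt.le] at this ⊢
    linarith
  rcases hm.eq_or_lt with rfl | hpos
  · exact le_of_forall_pos_le_add fun ε hε => (hsmall ε hε).elim fun δ ⟨hδ, h⟩ =>
      (h _ hp hδ.le).trans (by linarith)
  obtain ⟨k, hk, hkm⟩ := exists_succ_lt_le hle ((hd_lim.eventually (gt_mem_nhds hpos)).exists)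
  calc y ≤ (1 / 2) ^ k := hds k _ hp hkm
    _ = (1 / 2) ^ k * ramp (d (k + 1)) m := by rw [ramp_eq_one (hd _) hk.le, mul_one]
    _ ≤ rampSeries (fun n => d (n + 1)) m := le_rampSeries (fun n => d (n + 1)) k m
    _ ≤ γ m + f m := by
      have := hγ.1.nonneg hm
      have := mul_nonneg hc (ramp_nonneg (d 0) m)
      simp only [f]; linarith

theorem exists_nat_mem_Icc_add_mul {T t0 t : ℝ} (hT : 0 < T) (ht : t0 ≤ t) :
    ∃ n : ℕ, t ∈ Icc (t0 + n * T) (t0 + n * T + T) := by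
  have hq : 0 ≤ (t - t0) / T := div_nonneg (sub_nonneg.2 ht) hT.le
  refine ⟨⌊(t - t0) / T⌋₊, ?_, ?_⟩
  · linarith [(le_div_iff₀ hT).1 (Nat.floor_le hq)]
  · linarith [(div_lt_iff₀ hT).1 (Nat.lt_floor_add_one ((t - t0) / T))]

namespace Sys

variable (S : Sys X Uv) {u : ℝ → Uv}

theorem phi_phi (hu : u ∈ S.U) {t0 s t : ℝ} (h0 : 0 ≤ t0) (h1 : t0 ≤ s) (h2 : s ≤ t) (x : X) :
    S.phi t s (S.phi s t0 x u) u = S.phi t t0 x u := by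
  rcases h1.eq_or_lt with rfl | h1
  · rw [S.identity t0 h0 x u hu]
  rcases h2.eq_or_lt with rfl | h2
  · exact S.identity s (h0.trans h1.le) _ u hu
  · exact S.semigroup t0 s t x u h0 h1 h2 hu

end Sys

def ULS (S : Sys X Uv) (nrm : (ℝ → Uv) → ENNReal) : Prop :=
  ∀ ε > (0 : ℝ), ∃ δ > (0 : ℝ), ∀ t0 ≥ (0 : ℝ), ∀ x0 : X, ‖x0‖ ≤ δ →
    ∀ u ∈ S.U, nrm u ≤ ENNReal.ofReal δ → ∀ t ≥ t0, ‖S.phi t t0 x0 u‖ ≤ ε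

section

variable {S : Sys X Uv} {nrm : (ℝ → Uv) → ENNReal}

theorem AssumptionA1.norm_phi_le_add (hA1 : AssumptionA1 S nrm) {r ε T : ℝ} (hr : 0 < r)
    (hε : 0 < ε) (hT : 0 < T) :
    ∃ δ > (0 : ℝ), ∀ t0 ≥ (0 : ℝ), ∀ x0 : X, ∀ u ∈ S.U, nrm u ≤ ENNReal.ofReal δ →
      (∀ t ∈ Icc t0 (t0 + T), ‖S.phi t t0 x0 u‖ ≤ r ∧ ‖S.phi t t0 x0 (fun _ => 0)‖ ≤ r) →
      ∀ t ∈ Icc t0 (t0 + T), ‖S.phi t t0 x0 u‖ ≤ ‖S.phi t t0 x0 (fun _ => 0)‖ + ε := by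
  obtain ⟨δ, hδ, hA⟩ := hA1 r hr ε hε T hT
  refine ⟨δ, hδ, fun t0 ht0 x0 u hu hnu hr t ht => ?_⟩
  have hclose := hA t0 ht0 x0 u hu hnu (t0 + T) ⟨by linarith, le_rfl⟩ hr t ht
  rw [norm_sub_rev] at hclose
  linarith [norm_le_insert' (S.phi t t0 x0 u) (S.phi t t0 x0 (fun _ => 0))]

theorem exists_window (hA1 : AssumptionA1 S nrm) (hguas : ZeroGUAS S) (hugb : UGB S nrm)
    {ε : ℝ} (hε : 0 < ε) :
    ∃ δ > (0 : ℝ), ∃ η > (0 : ℝ), ∃ T > (0 : ℝ), ∀ s ≥ (0 : ℝ), ∀ y : X, ‖y‖ ≤ δ →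
      ∀ u ∈ S.U, nrm u ≤ ENNReal.ofReal η →
        (∀ t ∈ Icc s (s + T), ‖S.phi t s y u‖ ≤ ε) ∧ ‖S.phi (s + T) s y u‖ ≤ δ := by
  obtain ⟨β, hβ, hβbound⟩ := hguas
  obtain ⟨c, α, ρ, hc, hα, hρ, hB⟩ := hugb
  obtain ⟨δ, hδ, hβδ⟩ := (hβ.1 0 le_rfl).exists_pos_lt (half_pos hε)
  obtain ⟨T, hT, hβT⟩ : ∃ T > (0 : ℝ), β δ T < δ / 2 :=
    ((eventually_gt_atTop 0).and ((hβ.2 δ hδ.le).2.eventually (gt_mem_nhds (half_pos hδ)))).exists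
  set r := c + α δ + ρ 1 + β δ 0
  have hr : 0 < r := by
    linarith [hα.1.nonneg hδ.le, hρ.1.nonneg zero_le_one, (hβ.1 0 le_rfl).pos hδ]
  obtain ⟨η, hη, hA⟩ := hA1.norm_phi_le_add hr (lt_min (half_pos hε) (half_pos hδ)) hT
  refine ⟨δ, hδ, min η 1, by positivity, T, hT, fun s hs y hy u hu hnu => ?_⟩
  have hnu_fin : nrm u < ⊤ := hnu.trans_lt ENNReal.ofReal_lt_top
  have hρu : ρ (nrm u).toReal ≤ ρ 1 :=
    hρ.1.monotoneOn ENNReal.toReal_nonneg (mem_Ici.2 zero_le_one)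
      (ENNReal.toReal_le_of_le_ofReal zero_le_one
        (hnu.trans (ENNReal.ofReal_le_ofReal (min_le_right _ _))))
  have hzero : ∀ t ∈ Icc s (s + T), ‖S.phi t s y (fun _ => 0)‖ ≤ β δ (t - s) := fun t ht =>
    (hβbound s hs y t ht.1).trans (hβ.mono (norm_nonneg y) hy (sub_nonneg.2 ht.1) le_rfl)
  have hβ0 : ∀ t ∈ Icc s (s + T), β δ (t - s) ≤ β δ 0 := fun t ht =>
    hβ.mono hδ.le le_rfl le_rfl (sub_nonneg.2 ht.1)
  have hbounded : ∀ t ∈ Icc s (s + T),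
      ‖S.phi t s y u‖ ≤ r ∧ ‖S.phi t s y (fun _ => 0)‖ ≤ r := fun t ht => by
    have := hB s hs y u hu hnu_fin t ht.1
    have := hα.1.monotoneOn (norm_nonneg y) hδ.le hy
    have := hzero t ht
    have := hβ0 t ht
    constructor <;> linarith [hα.1.nonneg hδ.le, hρ.1.nonneg zero_le_one,
      (hβ.1 0 le_rfl).nonneg hδ.le]
  have hclose : ∀ t ∈ Icc s (s + T), ‖S.phi t s y u‖ ≤ β δ (t - s) + min (ε / 2) (δ / 2) :=
    fun t ht => (hA s hs y u hu (hnu.trans (ENNReal.ofReal_le_ofReal (min_le_left _ _)))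
      hbounded t ht).trans (by linarith [hzero t ht])
  refine ⟨fun t ht => ?_, ?_⟩
  · linarith [hclose t ht, hβ0 t ht, min_le_left (ε / 2) (δ / 2)]
  · have := hclose (s + T) ⟨by linarith, le_rfl⟩
    rw [add_sub_cancel_left] at this
    linarith [min_le_right (ε / 2) (δ / 2)]

theorem ULS_of_zeroGUAS_of_UGB (hA1 : AssumptionA1 S nrm) (hguas : ZeroGUAS S)
    (hugb : UGB S nrm) : ULS S nrm := by
  intro ε hε
  obtain ⟨δ, hδ, η, hη, T, hT, hwindow⟩ := exists_window hA1 hguas hugb hε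
  refine ⟨min δ η, by positivity, fun t0 ht0 x0 hx0 u hu hnu t ht => ?_⟩
  have hnuη : nrm u ≤ ENNReal.ofReal η := hnu.trans (ENNReal.ofReal_le_ofReal (min_le_right _ _))
  have hgrid_ge (n : ℕ) : t0 ≤ t0 + n * T := le_add_of_nonneg_right (by positivity)
  have hgrid (n : ℕ) : ‖S.phi (t0 + n * T) t0 x0 u‖ ≤ δ := by
    induction n with
    | zero => simpa [S.identity t0 ht0 x0 u hu] using hx0.trans (min_le_left _ _)
    | succ n ih =>
      have := (hwindow _ (ht0.trans (hgrid_ge n)) _ ih u hu hnuη).2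
      rw [S.phi_phi hu ht0 (hgrid_ge n) (t := t0 + n * T + T) (by linarith)] at this
      rwa [Nat.cast_succ, add_one_mul, ← add_assoc]
  obtain ⟨n, hn⟩ := exists_nat_mem_Icc_add_mul hT ht
  rw [← S.phi_phi hu ht0 (hgrid_ge n) hn.1]
  exact (hwindow _ (ht0.trans (hgrid_ge n)) _ (hgrid n) u hu hnuη).1 t hn

theorem ULS.UGS_of_UGB (huls : ULS S nrm) (hugb : UGB S nrm) : UGS S nrm := by
  obtain ⟨c, α, ρ, hc, hα, hρ, hB⟩ := hugb
  let s : Set (ℝ × ℝ) := {p | ∃ t0 ≥ (0 : ℝ), ∃ x0 : X, ∃ u ∈ S.U, nrm u < ⊤ ∧ ∃ t ≥ t0,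
    p = (max ‖x0‖ (nrm u).toReal, ‖S.phi t t0 x0 u‖)}
  obtain ⟨σ, hσ, hσs⟩ := exists_classKInf_majorant (s := s) hc
    (hα.add hρ.1.1 hρ.1.monotoneOn hρ.1.2.2)
    (by rintro _ ⟨t0, -, x0, u, -, -, t, -, rfl⟩; exact (norm_nonneg x0).trans (le_max_left _ _))
    (fun ε hε => by
      obtain ⟨δ, hδ, h⟩ := huls ε hε
      refine ⟨δ, hδ, ?_⟩
      rintro _ ⟨t0, ht0, x0, u, hu, hfin, t, ht, rfl⟩ hm
      exact h t0 ht0 x0 ((le_max_left _ _).trans hm) u hu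
        ((ENNReal.le_ofReal_iff_toReal_le hfin.ne hδ.le).2 ((le_max_right _ _).trans hm)) t ht)
    (by
      rintro _ ⟨t0, ht0, x0, u, hu, hfin, t, ht, rfl⟩
      have hm := (norm_nonneg x0).trans (le_max_left _ (nrm u).toReal)
      have := hB t0 ht0 x0 u hu hfin t ht
      have := hα.1.monotoneOn (norm_nonneg x0) hm (le_max_left _ _)
      have := hρ.1.monotoneOn ENNReal.toReal_nonneg hm (le_max_right _ _)
      dsimp only
      linarith)
  refine ⟨σ, σ, hσ, hσ, fun t0 ht0 x0 u hu hfin t ht => ?_⟩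
  exact (hσs _ ⟨t0, ht0, x0, u, hu, hfin, t, ht, rfl⟩).trans
    (hσ.1.map_max_le_add (norm_nonneg x0) ENNReal.toReal_nonneg)

end

theorem zeroGUAS_and_UGB_implies_UGS_general (S : Sys X Uv) (nrm : (ℝ → Uv) → ENNReal)
    (hA1 : AssumptionA1 S nrm)
    (hguas : ZeroGUAS S) (hugb : UGB S nrm) :
    UGS S nrm :=
  (ULS_of_zeroGUAS_of_UGB hA1 hguas hugb).UGS_of_UGB hugb

/-- Lemma 3.5: under Assumption 1, a system that is 0-GUAS and UGB (with respect to an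
admissible functional) is UGS (with respect to that functional). -/
theorem zeroGUAS_and_UGB_implies_UGS (S : Sys X Uv) (nrm : (ℝ → Uv) → ENNReal)
    (hadm : IsAdmissible S nrm) (hA1 : AssumptionA1 S nrm)
    (hguas : ZeroGUAS S) (hugb : UGB S nrm) :
    UGS S nrm :=
  zeroGUAS_and_UGB_implies_UGS_general S nrm hA1 hguas hugb
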